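/- Let s: ℝ → ℝ be a smooth, positive, π-periodic function with 𝔯(θ) := s''(θ) + s(θ) > 0 for all θ (the support function of a smooth, origin-symmetric, strictly convex closed curve), and let σ(θ) := s(θ)·𝔯(θ)^(1/3) be its affine support function. Then σ' vanishes at no fewer than eight points of one period: there exist eight distinct points θ₁, …, θ₈ ∈ [0, 2π) with σ'(θᵢ) = 0 for i = 1, …, 8. -/

import Mathlib

/-!
Put `G := 3 s' 𝔯 + s 𝔯'`, so that `σ' = 𝔯^(-2/3) G / 3`. For every `T(θ) = sin (θ - a) sin (θ - b)`,
i.e. every element of the span of `1, cos 2θ, sin 2θ`, the product `G T` is the derivative of an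
explicit `π`-periodic function, so `G` is orthogonal to `T` over a period. A continuous `π`-periodic
function with this property has four zeros in a period (Sturm–Hurwitz): otherwise it changes sign at
most twice per period, and placing `a, b` at the sign changes makes `G T` of constant sign without
vanishing identically. Periodicity doubles the four zeros to eight in `[0, 2π)`.
-/

open Real Set Filter

noncomputable section

/-- Radius of curvature of the curve with support function `f`: `𝔯[f] = f'' + f`. -/
def rad (f : ℝ → ℝ) (θ : ℝ) : ℝ := iteratedDeriv 2 f θ + f θ

open Function

section SinProduct

variable {a b x : ℝ}

theorem periodic_sin_sub_mul_sin_sub (a b : ℝ) :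
    Periodic (fun x => sin (x - a) * sin (x - b)) π := fun x => by
  simp only [add_sub_right_comm x π, sin_add_pi, neg_mul_neg]

theorem sin_sub_mul_sin_sub_neg (hax : a < x) (hxb : x < b) (hba : b ≤ a + π) :
    sin (x - a) * sin (x - b) < 0 :=
  mul_neg_of_pos_of_neg (sin_pos_of_pos_of_lt_pi (by linarith) (by linarith))
    (sin_neg_of_neg_of_neg_pi_lt (by linarith) (by linarith))

theorem sin_sub_mul_sin_sub_nonpos (hax : a ≤ x) (hxb : x ≤ b) (hba : b ≤ a + π) :
    sin (x - a) * sin (x - b) ≤ 0 :=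
  mul_nonpos_of_nonneg_of_nonpos (sin_nonneg_of_nonneg_of_le_pi (by linarith) (by linarith))
    (sin_nonpos_of_nonpos_of_neg_pi_le (by linarith) (by linarith))

theorem sin_sub_mul_sin_sub_nonneg (hab : a ≤ b) (hx : x ∉ Ioo a b) (hbx : b - π ≤ x)
    (hxa : x ≤ a + π) : 0 ≤ sin (x - a) * sin (x - b) := by
  rcases le_or_gt x a with hxa' | hax
  · exact mul_nonneg_of_nonpos_of_nonpos
      (sin_nonpos_of_nonpos_of_neg_pi_le (by linarith) (by linarith))
      (sin_nonpos_of_nonpos_of_neg_pi_le (by linarith) (by linarith))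
  · have hbx' : b ≤ x := not_lt.mp fun hxb => hx ⟨hax, hxb⟩
    exact mul_nonneg (sin_nonneg_of_nonneg_of_le_pi (by linarith) (by linarith))
      (sin_nonneg_of_nonneg_of_le_pi (by linarith) (by linarith))

end SinProduct

section ZerosOfPeriodic

variable {g : ℝ → ℝ}

theorem exists_mem_Ioo_eq_zero_of_mul_neg (hg : Continuous g) {u v : ℝ} (huv : u < v)
    (h : g u * g v < 0) : ∃ z ∈ Ioo u v, g z = 0 := by
  rcases mul_neg_iff.mp h with ⟨hu, hv⟩ | ⟨hu, hv⟩
  · exact intermediate_value_Ioo' huv.le hg.continuousOn ⟨hv, hu⟩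
  · exact intermediate_value_Ioo huv.le hg.continuousOn ⟨hu, hv⟩

theorem exists_four_zeros_of_alternating (hg : Continuous g) {x₀ x₁ x₂ x₃ x₄ : ℝ}
    (h₀₁ : x₀ < x₁) (h₁₂ : x₁ < x₂) (h₂₃ : x₂ < x₃) (h₃₄ : x₃ < x₄)
    (hg₀ : 0 < g x₀) (hg₁ : g x₁ < 0) (hg₂ : 0 < g x₂) (hg₃ : g x₃ < 0) (hg₄ : 0 < g x₄) :
    ∃ z : Fin 4 → ℝ, Injective z ∧ (∀ i, z i ∈ Ioo x₀ x₄) ∧ ∀ i, g (z i) = 0 := by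
  obtain ⟨z₁, hz₁, hgz₁⟩ :=
    exists_mem_Ioo_eq_zero_of_mul_neg hg h₀₁ (mul_neg_of_pos_of_neg hg₀ hg₁)
  obtain ⟨z₂, hz₂, hgz₂⟩ :=
    exists_mem_Ioo_eq_zero_of_mul_neg hg h₁₂ (mul_neg_of_neg_of_pos hg₁ hg₂)
  obtain ⟨z₃, hz₃, hgz₃⟩ :=
    exists_mem_Ioo_eq_zero_of_mul_neg hg h₂₃ (mul_neg_of_pos_of_neg hg₂ hg₃)
  obtain ⟨z₄, hz₄, hgz₄⟩ :=
    exists_mem_Ioo_eq_zero_of_mul_neg hg h₃₄ (mul_neg_of_neg_of_pos hg₃ hg₄)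
  have hmono : StrictMono ![z₁, z₂, z₃, z₄] := by
    refine Fin.strictMono_iff_lt_succ.mpr fun i => ?_
    fin_cases i <;> simp <;> linarith [hz₁.2, hz₂.1, hz₂.2, hz₃.1, hz₃.2, hz₄.1]
  refine ⟨_, hmono.injective, fun i => ?_, fun i => ?_⟩
  · fin_cases i <;> simp <;> constructor <;>
      linarith [hz₁.1, hz₁.2, hz₂.1, hz₂.2, hz₃.1, hz₃.2, hz₄.1, hz₄.2]
  · fin_cases i <;> assumption

theorem Function.Periodic.exists_zeros_Ico_zero {ι : Type*} {c : ℝ} (hc : 0 < c)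
    (hper : Periodic g c) {p : ℝ} {z : ι → ℝ} (hz : Injective z) (hmem : ∀ i, z i ∈ Ico p (p + c))
    (hzero : ∀ i, g (z i) = 0) :
    ∃ z' : ι → ℝ, Injective z' ∧ (∀ i, z' i ∈ Ico 0 c) ∧ ∀ i, g (z' i) = 0 := by
  refine ⟨toIcoMod hc 0 ∘ z, fun i j hij => hz ?_, fun i => ?_, fun i => ?_⟩
  · simpa [(toIcoMod_eq_self hc).mpr (hmem i), (toIcoMod_eq_self hc).mpr (hmem j)] using
      congrArg (toIcoMod hc p) hij
  · simpa using toIcoMod_mem_Ico hc 0 (z i)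
  · exact (hper.sub_zsmul_eq _).trans (hzero i)

theorem Function.Periodic.exists_zeros_Ico_two_mul {n : ℕ} {c : ℝ} (hper : Periodic g c)
    {z : Fin n → ℝ} (hz : Injective z) (hmem : ∀ i, z i ∈ Ico 0 c) (hzero : ∀ i, g (z i) = 0) :
    ∃ z' : Fin (n + n) → ℝ, Injective z' ∧ (∀ i, z' i ∈ Ico 0 (2 * c)) ∧ ∀ i, g (z' i) = 0 := by
  refine ⟨Fin.append z (fun i => z i + c), Fin.append_injective_iff.mpr
    ⟨hz, fun i j h => hz (add_right_cancel h), fun i j h => ?_⟩,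
    Fin.addCases (fun i => ?_) (fun i => ?_), Fin.addCases (fun i => ?_) (fun i => ?_)⟩
  · linarith [(hmem i).2, (hmem j).1]
  · simp only [Fin.append_left]
    exact ⟨(hmem i).1, by linarith [(hmem i).2, (hmem i).1]⟩
  · simp only [Fin.append_right]
    exact ⟨by linarith [(hmem i).1, (hmem i).2], by linarith [(hmem i).2]⟩
  · rw [Fin.append_left]
    exact hzero i
  · rw [Fin.append_right, hper (z i)]
    exact hzero i

end ZerosOfPeriodic

section SturmHurwitz

variable {g : ℝ → ℝ}

theorem exists_mul_sin_sub_mul_sin_sub_neg (hg : Continuous g) (hper : Periodic g π)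
    (horth : ∀ a b, ∫ x in 0..π, g x * (sin (x - a) * sin (x - b)) = 0) (p a b : ℝ) {x₀ : ℝ}
    (hx₀ : x₀ ∈ Icc p (p + π)) (hpos : 0 < g x₀ * (sin (x₀ - a) * sin (x₀ - b))) :
    ∃ x ∈ Icc p (p + π), g x * (sin (x - a) * sin (x - b)) < 0 := by
  by_contra! hnonneg
  have hint : ∫ x in p..p + π, g x * (sin (x - a) * sin (x - b)) = 0 := by
    have hT : Periodic (fun x => g x * (sin (x - a) * sin (x - b))) π :=
      hper.mul (periodic_sin_sub_mul_sin_sub a b)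
    rw [hT.intervalIntegral_add_eq p 0, zero_add]
    exact horth a b
  exact (intervalIntegral.integral_pos (by linarith [pi_pos]) (by fun_prop)
    (fun x hx => hnonneg x (Ioc_subset_Icc_self hx)) ⟨x₀, hx₀, hpos⟩).ne' hint

theorem exists_alternating_or_nonneg_mul_sin_sub_mul_sin_sub (hg : Continuous g) {p q : ℝ}
    (hp : 0 < g p) (hpπ : 0 < g (p + π)) (hq : q ∈ Icc p (p + π)) (hgq : g q < 0) :
    (∃ x₁ x₂ x₃, p < x₁ ∧ x₁ < x₂ ∧ x₂ < x₃ ∧ x₃ < p + π ∧ g x₁ < 0 ∧ 0 < g x₂ ∧ g x₃ < 0) ∨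
      ∃ a b, a < q ∧ q < b ∧ b ≤ a + π ∧
        ∀ x ∈ Icc p (p + π), 0 ≤ g x * (sin (x - a) * sin (x - b)) := by
  set N := {x ∈ Icc p (p + π) | g x < 0}
  have hN : N.Nonempty := ⟨q, hq, hgq⟩
  have hbdd : BddBelow N := ⟨p, fun x hx => hx.1.1⟩
  have hbdd' : BddAbove N := ⟨p + π, fun x hx => hx.1.2⟩
  by_cases hmid : ∃ w ∈ Ioo (sInf N) (sSup N), 0 < g w
  · left
    obtain ⟨w, ⟨hw₁, hw₂⟩, hgw⟩ := hmid
    obtain ⟨x₁, ⟨hx₁, hgx₁⟩, hx₁w⟩ := exists_lt_of_csInf_lt hN hw₁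
    obtain ⟨x₃, ⟨hx₃, hgx₃⟩, hwx₃⟩ := exists_lt_of_lt_csSup hN hw₂
    exact ⟨x₁, w, x₃, hx₁.1.lt_of_ne (by rintro rfl; linarith), hx₁w, hwx₃,
      hx₃.2.lt_of_ne (by rintro rfl; linarith), hgx₁, hgw, hgx₃⟩
  right
  push Not at hmid
  have hpq : p < q := hq.1.lt_of_ne (by rintro rfl; linarith)
  have hqp : q < p + π := hq.2.lt_of_ne (by rintro rfl; linarith)
  -- `N` is a neighbourhood of `q`, hence `sInf N < q < sSup N`
  obtain ⟨l, u, ⟨hlq, hqu⟩, hsub⟩ := mem_nhds_iff_exists_Ioo_subset.mp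
    (inter_mem (Icc_mem_nhds hpq hqp) ((isOpen_lt hg continuous_const).mem_nhds hgq))
  have hα : sInf N < q := (csInf_le hbdd (hsub ⟨by linarith, by linarith⟩ :
    (l + q) / 2 ∈ N)).trans_lt (by linarith)
  have hβ : q < sSup N := (by linarith : q < (q + u) / 2).trans_le
    (le_csSup hbdd' (hsub ⟨by linarith, by linarith⟩))
  have hpα : p ≤ sInf N := le_csInf hN fun x hx => hx.1.1
  have hβp : sSup N ≤ p + π := csSup_le hN fun x hx => hx.1.2
  refine ⟨sInf N, sSup N, hα, hβ, by linarith, fun x hx => ?_⟩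
  rcases lt_or_ge (g x) 0 with hgx | hgx
  · exact mul_nonneg_of_nonpos_of_nonpos hgx.le (sin_sub_mul_sin_sub_nonpos
      (csInf_le hbdd ⟨hx, hgx⟩) (le_csSup hbdd' ⟨hx, hgx⟩) (by linarith))
  by_cases hxN : x ∈ Ioo (sInf N) (sSup N)
  · simp [le_antisymm (hmid x hxN) hgx]
  · exact mul_nonneg hgx (sin_sub_mul_sin_sub_nonneg (hα.trans hβ).le hxN
      (by linarith [hx.1]) (by linarith [hx.2]))

theorem exists_four_zeros_of_orthogonal (hg : Continuous g) (hper : Periodic g π)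
    (horth : ∀ a b, ∫ x in 0..π, g x * (sin (x - a) * sin (x - b)) = 0) :
    ∃ z : Fin 4 → ℝ, Injective z ∧ (∀ i, z i ∈ Ico 0 π) ∧ ∀ i, g (z i) = 0 := by
  by_cases hzero : ∀ x, g x = 0
  · refine ⟨fun i => i * π / 4, fun i j hij => ?_, fun i => ⟨by positivity, ?_⟩,
      fun i => hzero _⟩
    · have : ((i : ℕ) : ℝ) = (j : ℕ) := by
        simpa [pi_ne_zero] using hij
      exact Fin.ext (by exact_mod_cast this)
    · have : ((i : ℕ) : ℝ) ≤ 3 := by exact_mod_cast Nat.lt_succ_iff.mp i.isLt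
      nlinarith [pi_pos]
  push Not at hzero
  obtain ⟨p, hp⟩ := hzero
  wlog hpos : 0 < g p generalizing g
  · obtain ⟨z, hz, hmem, hz₀⟩ := this hg.neg (fun x => by simp only [Pi.neg_apply, hper x])
      (fun a b => by simpa [neg_mul, intervalIntegral.integral_neg] using horth a b)
      (neg_ne_zero.mpr hp) (by simpa using hp.lt_of_le (not_lt.mp hpos))
    exact ⟨z, hz, hmem, fun i => neg_eq_zero.mp (hz₀ i)⟩
  suffices ∃ z : Fin 4 → ℝ, Injective z ∧ (∀ i, z i ∈ Ioo p (p + π)) ∧ ∀ i, g (z i) = 0 by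
    obtain ⟨z, hz, hmem, hz₀⟩ := this
    exact hper.exists_zeros_Ico_zero pi_pos hz (fun i => Ioo_subset_Ico_self (hmem i)) hz₀
  have hpπ : 0 < g (p + π) := (hper p).symm ▸ hpos
  by_cases hneg : ∃ q ∈ Icc p (p + π), g q < 0
  · obtain ⟨q, hq, hgq⟩ := hneg
    rcases exists_alternating_or_nonneg_mul_sin_sub_mul_sin_sub hg hpos hpπ hq hgq with
      ⟨x₁, x₂, x₃, h₀₁, h₁₂, h₂₃, h₃₄, hg₁, hg₂, hg₃⟩ | ⟨a, b, haq, hqb, hba, hnonneg⟩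
    · exact exists_four_zeros_of_alternating hg h₀₁ h₁₂ h₂₃ h₃₄ hpos hg₁ hg₂ hg₃ hpπ
    · obtain ⟨x, hx, hgx⟩ := exists_mul_sin_sub_mul_sin_sub_neg hg hper horth p a b hq
        (mul_pos_of_neg_of_neg hgq (sin_sub_mul_sin_sub_neg haq hqb hba))
      exact absurd (hnonneg x hx) hgx.not_ge
  · push Not at hneg
    obtain ⟨x, hx, hgx⟩ := exists_mul_sin_sub_mul_sin_sub_neg hg hper horth p (p + π / 2)
      (p + π / 2) (left_mem_Icc.mpr (by linarith [pi_pos])) (by simpa using hpos)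
    exact absurd (mul_nonneg (hneg x hx) (mul_self_nonneg _)) hgx.not_ge

end SturmHurwitz

section SupportFunction

theorem Function.Periodic.deriv {𝕜 F : Type*} [NontriviallyNormedField 𝕜] [NormedAddCommGroup F]
    [NormedSpace 𝕜 F] {f : 𝕜 → F} {c : 𝕜} (hf : Periodic f c) : Periodic (deriv f) c := fun x => by
  rw [← deriv_comp_add_const, show (fun y => f (y + c)) = f from funext hf]

theorem hasDerivAt_mul_rpow_one_third {f r : ℝ → ℝ} {f' r' θ : ℝ} (hf : HasDerivAt f f' θ)
    (hr : HasDerivAt r r' θ) (hr₀ : 0 < r θ) :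
    HasDerivAt (fun x => f x * r x ^ ((1 : ℝ) / 3))
      (r θ ^ (-(2 : ℝ) / 3) / 3 * (3 * f' * r θ + f θ * r')) θ := by
  refine (hf.mul (hr.rpow_const (Or.inl hr₀.ne'))).congr_deriv ?_
  have h : r θ ^ ((1 : ℝ) / 3) = r θ ^ (-(2 : ℝ) / 3) * r θ := by
    rw [← rpow_add_one hr₀.ne']; norm_num
  rw [h, show (1 : ℝ) / 3 - 1 = -(2 : ℝ) / 3 by norm_num]
  ring

-- For `T = sin (y - a) sin (y - b)` the primitive is `T (s'² + s s'') - T' s s' + (T'' + 4T) s²/2`;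
-- its derivative is `(3 s' 𝔯 + s 𝔯') T + (T''' + 4T') s²/2`, and `T''' + 4T' = 0`.
theorem hasDerivAt_primitive_mul_sin_sub_mul_sin_sub {s s' r r' : ℝ → ℝ} {x : ℝ} (a b : ℝ)
    (hs : HasDerivAt s (s' x) x) (hs' : HasDerivAt s' (r x - s x) x) (hr : HasDerivAt r (r' x) x) :
    HasDerivAt (fun y => sin (y - a) * sin (y - b) * (s' y ^ 2 + s y * (r y - s y))
        - sin (2 * y - a - b) * (s y * s' y) + cos (a - b) * s y ^ 2)
      ((3 * s' x * r x + s x * r' x) * (sin (x - a) * sin (x - b))) x := by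
  have hT := (((hasDerivAt_id x).sub_const a).sin).mul ((hasDerivAt_id x).sub_const b).sin
  have hT' := (((hasDerivAt_id x).const_mul 2).sub_const a).sub_const b |>.sin
  refine ((hT.mul ((hs'.pow 2).add (hs.mul (hr.sub hs)))).sub (hT'.mul (hs.mul hs')) |>.add
    ((hs.pow 2).const_mul (cos (a - b)))).congr_deriv ?_
  have hsin : sin (2 * x - a - b) = sin (x - a) * cos (x - b) + cos (x - a) * sin (x - b) := by
    rw [← sin_add]; ring_nf
  have hcos : cos (2 * x - a - b) = cos (a - b) - 2 * sin (x - a) * sin (x - b) := by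
    rw [show 2 * x - a - b = (x - a) + (x - b) by ring, show a - b = (x - b) - (x - a) by ring,
      cos_add, cos_sub (x - b)]
    ring
  simp only [id, Pi.mul_apply, Pi.add_apply, Pi.pow_apply, Pi.sub_apply, hsin, hcos]
  ring

def affineNumerator (s : ℝ → ℝ) (θ : ℝ) : ℝ := 3 * deriv s θ * rad s θ + s θ * deriv (rad s) θ

variable {s : ℝ → ℝ}

theorem rad_eq (s : ℝ → ℝ) : rad s = deriv (deriv s) + s := by
  funext θ
  simp [rad, iteratedDeriv_succ]

theorem contDiff_rad (hs : ContDiff ℝ 3 s) : ContDiff ℝ 1 (rad s) := by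
  rw [rad_eq]
  exact (hs.iterate_deriv' 1 2).add (hs.of_le (by norm_num))

theorem Function.Periodic.rad {c : ℝ} (hper : Periodic s c) : Periodic (rad s) c := by
  rw [rad_eq]
  exact hper.deriv.deriv.add hper

theorem Function.Periodic.affineNumerator {c : ℝ} (hper : Periodic s c) :
    Periodic (affineNumerator s) c := fun θ => by
  simp only [_root_.affineNumerator, hper θ, hper.deriv θ, hper.rad θ, hper.rad.deriv θ]

theorem continuous_affineNumerator (hs : ContDiff ℝ 3 s) : Continuous (affineNumerator s) := by
  have hr := contDiff_rad hs
  exact ((continuous_const.mul (hs.continuous_deriv (by norm_num))).mul hr.continuous).add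
    (hs.continuous.mul hr.continuous_deriv_one)

theorem integral_affineNumerator_mul_sin_sub_mul_sin_sub (hs : ContDiff ℝ 3 s)
    (hper : Periodic s π) (a b : ℝ) :
    ∫ x in 0..π, affineNumerator s x * (sin (x - a) * sin (x - b)) = 0 := by
  have hs' (x : ℝ) : HasDerivAt (deriv s) (rad s x - s x) x := by
    rw [rad, add_sub_cancel_right, iteratedDeriv_succ, iteratedDeriv_one]
    exact ((hs.iterate_deriv' 2 1).differentiable (by norm_num) x).hasDerivAt
  obtain ⟨F, hF, hFper⟩ : ∃ F : ℝ → ℝ,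
      (∀ x, HasDerivAt F (affineNumerator s x * (sin (x - a) * sin (x - b))) x) ∧
        Periodic F π :=
    ⟨_, fun x => hasDerivAt_primitive_mul_sin_sub_mul_sin_sub a b
      (hs.differentiable (by norm_num) x).hasDerivAt (hs' x)
      ((contDiff_rad hs).differentiable one_ne_zero x).hasDerivAt, fun y => by
      simp only [hper y, hper.deriv y, hper.rad y, ← periodic_sin_sub_mul_sin_sub a b y,
        show 2 * (y + π) - a - b = 2 * y - a - b + 2 * π by ring, sin_add_two_pi]⟩
  rw [intervalIntegral.integral_eq_sub_of_hasDerivAt (fun x _ => hF x)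
    (((continuous_affineNumerator hs).mul (by fun_prop)).intervalIntegrable _ _)]
  simpa using sub_eq_zero.mpr (hFper 0)

theorem deriv_affineSupport (hs : ContDiff ℝ 3 s) {θ : ℝ} (hr : 0 < rad s θ) :
    deriv (fun x => s x * rad s x ^ ((1 : ℝ) / 3)) θ =
      rad s θ ^ (-(2 : ℝ) / 3) / 3 * affineNumerator s θ :=
  (hasDerivAt_mul_rpow_one_third (hs.differentiable (by norm_num) θ).hasDerivAt
    ((contDiff_rad hs).differentiable one_ne_zero θ).hasDerivAt hr).deriv

end SupportFunction

theorem affine_support_function_eight_critical_points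
    (s : ℝ → ℝ) (hsmooth : ContDiff ℝ (⊤ : ℕ∞) s)
    (hper : Function.Periodic s π) (hconv : ∀ θ, 0 < rad s θ)
    (σ : ℝ → ℝ) (hσ : σ = fun θ => s θ * rad s θ ^ ((1:ℝ) / 3)) :
    ∃ c : Fin 8 → ℝ, Function.Injective c ∧
      (∀ i, c i ∈ Ico (0:ℝ) (2 * π)) ∧ ∀ i, deriv σ (c i) = 0 := by
  have hs : ContDiff ℝ 3 s := hsmooth.of_le (WithTop.coe_le_coe.mpr le_top)
  obtain ⟨z, hz, hmem, hzero⟩ := exists_four_zeros_of_orthogonal (continuous_affineNumerator hs)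
    hper.affineNumerator (integral_affineNumerator_mul_sin_sub_mul_sin_sub hs hper)
  obtain ⟨c, hc, hcmem, hczero⟩ := hper.affineNumerator.exists_zeros_Ico_two_mul hz hmem hzero
  refine ⟨c, hc, hcmem, fun i => ?_⟩
  rw [hσ, deriv_affineSupport hs (hconv _), hczero i, mul_zero]

end
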